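/- Let E and F be Banach spaces, n a positive integer, 1 ≤ p < ∞, and let P : E → F be a continuous n-homogeneous polynomial. Suppose there exist a regular Borel probability measure μ on B_{E*} with the weak* topology and a continuous n-homogeneous polynomial Q : G_{E,p} → F, where G_{E,p} is the closure in L_p(μ) of the subspace { e_x : x ∈ E }, such that P(x) = Q(e_x) for every x ∈ E. Then P is p-dominated and ‖P‖_{d,p} ≤ ‖Q‖. -/

import Mathlib

open MeasureTheory Finset
open scoped Classical

noncomputable section

/-- The closed unit ball of the dual of `E`, equipped with the weak* topology. -/
abbrev DualBall (𝕜 E : Type) [RCLike 𝕜] [NormedAddCommGroup E] [NormedSpace 𝕜 E] : Type :=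
  {φ : WeakDual 𝕜 E // ‖WeakDual.toStrongDual φ‖ ≤ 1}

variable (𝕜 : Type) [RCLike 𝕜] {E F G : Type} [NormedAddCommGroup E] [NormedSpace 𝕜 E]
  [NormedAddCommGroup F] [NormedSpace 𝕜 F] [NormedAddCommGroup G] [NormedSpace 𝕜 G]

instance : MeasurableSpace (DualBall 𝕜 E) := borel _
instance : BorelSpace (DualBall 𝕜 E) := ⟨rfl⟩

/-- `P : E → F` is a continuous `n`-homogeneous polynomial: `P x = M (x, …, x)` for some
continuous `n`-linear map `M`. -/
def IsHomogPoly (n : ℕ) (P : E → F) : Prop :=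
  ∃ M : ContinuousMultilinearMap 𝕜 (fun _ : Fin n => E) F, ∀ x, P x = M (fun _ => x)

/-- The `p`-domination inequality for the `n`-homogeneous map `P` with constant `C`. -/
def DomIneq (p : ℝ) (n : ℕ) (P : E → F) (C : ℝ) : Prop :=
  ∀ (m : ℕ) (x : Fin m → E),
    (∑ j, ‖P (x j)‖ ^ (p / (n : ℝ))) ^ ((n : ℝ) / p) ≤
      C * ⨆ φ : DualBall 𝕜 E, (∑ j, ‖φ.1 (x j)‖ ^ p) ^ ((n : ℝ) / p)

/-- The `p`-dominated norm `‖P‖_{d,p}`: the infimum of the constants in the domination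
inequality. -/
def domNorm (p : ℝ) (n : ℕ) (P : E → F) : ℝ :=
  sInf {C : ℝ | 0 < C ∧ DomIneq 𝕜 p n P C}

/-- The element `(e_x)^n` of `L_{p/n}(μ)`, i.e. the class of the continuous function
`x* ↦ ⟨x*, x⟩ ^ n` on the dual ball. -/
def evalPowLp (p : ℝ) (n : ℕ) (μ : Measure (DualBall 𝕜 E)) (x : E) :
    Lp 𝕜 (ENNReal.ofReal (p / (n : ℝ))) μ :=
  if h : MemLp (fun φ : DualBall 𝕜 E => (φ.1 x) ^ n) (ENNReal.ofReal (p / (n : ℝ))) μ then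
    h.toLp _
  else 0

/-- The subspace `E^{p/n}` of `L_{p/n}(μ)` spanned by the functions `(e_x)^n`, `x ∈ E`. -/
def Epn (p : ℝ) (n : ℕ) (μ : Measure (DualBall 𝕜 E)) :
    Submodule 𝕜 (Lp 𝕜 (ENNReal.ofReal (p / (n : ℝ))) μ) :=
  Submodule.span 𝕜 (Set.range (evalPowLp 𝕜 p n μ))

/-- The norm `π_{p/n}` on `E^{p/n}`. -/
def piNorm (p : ℝ) (n : ℕ) (μ : Measure (DualBall 𝕜 E))
    (g : Lp 𝕜 (ENNReal.ofReal (p / (n : ℝ))) μ) : ℝ :=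
  sInf {t : ℝ | ∃ (m : ℕ) (c : Fin m → 𝕜) (x : Fin m → E),
    g = ∑ i, c i • evalPowLp 𝕜 p n μ (x i) ∧
    t = ∑ i, ‖c i‖ * ‖evalPowLp 𝕜 p n μ (x i)‖}

/-- The element `e_x` of `L_p(μ)`, i.e. the class of the continuous function
`x* ↦ ⟨x*, x⟩` on the dual ball. -/
def evalLp (p : ℝ) (μ : Measure (DualBall 𝕜 E)) (x : E) : Lp 𝕜 (ENNReal.ofReal p) μ :=
  if h : MemLp (fun φ : DualBall 𝕜 E => φ.1 x) (ENNReal.ofReal p) μ then h.toLp _ else 0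

/-- The absolutely `p`-summing inequality for `S` with constant `C`. -/
def SummingIneq (p : ℝ) (S : E → G) (C : ℝ) : Prop :=
  ∀ (m : ℕ) (x : Fin m → E),
    (∑ j, ‖S (x j)‖ ^ p) ^ (1 / p) ≤
      C * ⨆ φ : DualBall 𝕜 E, (∑ j, ‖φ.1 (x j)‖ ^ p) ^ (1 / p)

/-- The `p`-summing norm `π_p(S)`. -/
def summingNorm (p : ℝ) (S : E → G) : ℝ :=
  sInf {C : ℝ | 0 < C ∧ SummingIneq 𝕜 p S C}

/-- The sup norm of a map on the closed unit ball. -/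
def supNorm (Q : G → F) : ℝ := ⨆ y : {y : G // ‖y‖ ≤ 1}, ‖Q y.1‖

/-- `G_{E,p}`: the closure in `L_p(μ)` of the subspace of all `e_x`, `x ∈ E`. -/
def GEp (p : ℝ) (μ : Measure (DualBall 𝕜 E)) [Fact (1 ≤ ENNReal.ofReal p)] :
    Submodule 𝕜 (Lp 𝕜 (ENNReal.ofReal p) μ) :=
  (Submodule.span 𝕜 (Set.range (evalLp 𝕜 p μ))).topologicalClosure

/-!
Homogeneity gives `‖P x‖ = ‖Q e_x‖ ≤ ‖Q‖ ‖e_x‖ⁿ`, so the domination inequality reduces to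
`∑ ‖e_{x_j}‖ᵖ ≤ sup_{x*} ∑ |x*(x_j)|ᵖ`. The left side is `∫ ∑ |x*(x_j)|ᵖ dμ(x*)`, which is at
most that supremum because `μ` is a probability measure.
-/

open scoped ENNReal

theorem Real.rpow_iSup_le_iSup_rpow {ι : Sort*} [Nonempty ι] {f : ι → ℝ} (hf0 : ∀ i, 0 ≤ f i)
    (hf : BddAbove (Set.range f)) {r : ℝ} (hr : 0 < r) : (⨆ i, f i) ^ r ≤ ⨆ i, f i ^ r := by
  obtain ⟨B, hB⟩ := hf
  have hbdd : BddAbove (Set.range fun i => f i ^ r) :=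
    ⟨B ^ r, Set.forall_mem_range.2 fun i =>
      Real.rpow_le_rpow (hf0 i) (hB (Set.mem_range_self i)) hr.le⟩
  have hsup0 : 0 ≤ ⨆ i, f i ^ r := Real.iSup_nonneg fun i => Real.rpow_nonneg (hf0 i) r
  have hle : (⨆ i, f i) ≤ (⨆ i, f i ^ r) ^ r⁻¹ := ciSup_le fun i => by
    calc f i = (f i ^ r) ^ r⁻¹ := (Real.rpow_rpow_inv (hf0 i) hr.ne').symm
      _ ≤ (⨆ i, f i ^ r) ^ r⁻¹ :=
        Real.rpow_le_rpow (Real.rpow_nonneg (hf0 i) r) (le_ciSup hbdd i) (inv_nonneg.2 hr.le)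
  calc (⨆ i, f i) ^ r ≤ ((⨆ i, f i ^ r) ^ r⁻¹) ^ r :=
        Real.rpow_le_rpow (Real.iSup_nonneg hf0) hle hr.le
    _ = ⨆ i, f i ^ r := Real.rpow_inv_rpow hsup0 hr.ne'

namespace IsHomogPoly

variable {𝕜} {n : ℕ} {Q : G → F}

theorem map_smul (hQ : IsHomogPoly 𝕜 n Q) (c : 𝕜) (y : G) : Q (c • y) = c ^ n • Q y := by
  obtain ⟨M, hM⟩ := hQ
  simpa [hM, Finset.prod_const] using M.map_smul_univ (fun _ => c) (fun _ => y)

theorem bddAbove_norm_unitBall (hQ : IsHomogPoly 𝕜 n Q) :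
    BddAbove (Set.range fun y : {y : G // ‖y‖ ≤ 1} => ‖Q y.1‖) := by
  obtain ⟨M, hM⟩ := hQ
  refine ⟨‖M‖, Set.forall_mem_range.2 fun y => ?_⟩
  calc ‖Q y.1‖ ≤ ‖M‖ * ∏ _i : Fin n, ‖y.1‖ := hM y.1 ▸ M.le_opNorm _
    _ ≤ ‖M‖ * 1 := by
      gcongr
      exact Finset.prod_le_one (fun _ _ => norm_nonneg _) fun _ _ => y.2
    _ = ‖M‖ := mul_one _

theorem norm_le_supNorm (hQ : IsHomogPoly 𝕜 n Q) {y : G} (hy : ‖y‖ ≤ 1) : ‖Q y‖ ≤ supNorm Q :=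
  le_ciSup hQ.bddAbove_norm_unitBall (⟨y, hy⟩ : {y : G // ‖y‖ ≤ 1})

theorem supNorm_nonneg (hQ : IsHomogPoly 𝕜 n Q) : 0 ≤ supNorm Q :=
  (norm_nonneg _).trans (hQ.norm_le_supNorm (y := 0) (by simp))

theorem norm_le_supNorm_mul_pow (hQ : IsHomogPoly 𝕜 n Q) (y : G) :
    ‖Q y‖ ≤ supNorm Q * ‖y‖ ^ n := by
  set z : G := ((‖y‖ : 𝕜))⁻¹ • y
  have hy : ((‖y‖ : 𝕜)) • z = y := by
    rcases eq_or_ne y 0 with rfl | hy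
    · simp
    · exact smul_inv_smul₀ (by simpa using hy) y
  have hz : ‖z‖ ≤ 1 := by
    rw [norm_smul, norm_inv, RCLike.norm_ofReal, abs_norm]
    exact inv_mul_le_one
  calc ‖Q y‖ = ‖y‖ ^ n * ‖Q z‖ := by
        rw [← hy, hQ.map_smul, norm_smul, norm_pow, RCLike.norm_ofReal, abs_norm, hy]
    _ ≤ ‖y‖ ^ n * supNorm Q := by gcongr; exact hQ.norm_le_supNorm hz
    _ = supNorm Q * ‖y‖ ^ n := mul_comm _ _

end IsHomogPoly

namespace DualBall

variable {𝕜}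

instance : Nonempty (DualBall 𝕜 E) := ⟨⟨0, by simp⟩⟩

theorem norm_apply_le (φ : DualBall 𝕜 E) (x : E) : ‖φ.1 x‖ ≤ ‖x‖ :=
  calc ‖φ.1 x‖ ≤ ‖WeakDual.toStrongDual φ.1‖ * ‖x‖ := (WeakDual.toStrongDual φ.1).le_opNorm x
    _ ≤ ‖x‖ := mul_le_of_le_one_left (norm_nonneg x) φ.2

theorem continuous_apply (x : E) : Continuous fun φ : DualBall 𝕜 E => φ.1 x :=
  (WeakDual.eval_continuous x).comp continuous_subtype_val

theorem bddAbove_sum_norm_rpow {p : ℝ} (hp : 0 ≤ p) {m : ℕ} (x : Fin m → E) :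
    BddAbove (Set.range fun φ : DualBall 𝕜 E => ∑ j, ‖φ.1 (x j)‖ ^ p) :=
  ⟨∑ j, ‖x j‖ ^ p, Set.forall_mem_range.2 fun φ => Finset.sum_le_sum fun j _ =>
    Real.rpow_le_rpow (norm_nonneg _) (φ.norm_apply_le (x j)) hp⟩

end DualBall

section evalLp

variable {𝕜} {p : ℝ} {μ : Measure (DualBall 𝕜 E)}

theorem memLp_apply [IsFiniteMeasure μ] (q : ℝ≥0∞) (x : E) :
    MemLp (fun φ : DualBall 𝕜 E => φ.1 x) q μ :=
  MemLp.of_bound (DualBall.continuous_apply x).aestronglyMeasurable ‖x‖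
    (Filter.Eventually.of_forall fun φ => φ.norm_apply_le x)

theorem norm_evalLp_rpow [IsFiniteMeasure μ] (hp : 0 < p) (x : E) :
    ‖evalLp 𝕜 p μ x‖ ^ p = ∫ φ, ‖φ.1 x‖ ^ p ∂μ := by
  have hint : 0 ≤ ∫ φ, ‖φ.1 x‖ ^ p ∂μ :=
    integral_nonneg fun φ => Real.rpow_nonneg (norm_nonneg _) p
  rw [evalLp, dif_pos (memLp_apply _ x), Lp.norm_toLp,
    (memLp_apply _ x).eLpNorm_eq_integral_rpow_norm (by simpa using hp) ENNReal.ofReal_ne_top,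
    ENNReal.toReal_ofReal hp.le, ENNReal.toReal_ofReal (Real.rpow_nonneg hint _),
    Real.rpow_inv_rpow hint hp.ne']

theorem sum_norm_evalLp_rpow_le [IsProbabilityMeasure μ] (hp : 0 < p) {m : ℕ} (x : Fin m → E) :
    ∑ j, ‖evalLp 𝕜 p μ (x j)‖ ^ p ≤ ⨆ φ : DualBall 𝕜 E, ∑ j, ‖φ.1 (x j)‖ ^ p := by
  have hint : ∀ j, Integrable (fun φ : DualBall 𝕜 E => ‖φ.1 (x j)‖ ^ p) μ := fun j => by
    simpa [ENNReal.toReal_ofReal hp.le] using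
      (memLp_apply (ENNReal.ofReal p) (x j) (μ := μ)).integrable_norm_rpow'
  calc ∑ j, ‖evalLp 𝕜 p μ (x j)‖ ^ p = ∫ φ, ∑ j, ‖φ.1 (x j)‖ ^ p ∂μ := by
        rw [integral_finsetSum _ fun j _ => hint j]
        exact Finset.sum_congr rfl fun j _ => norm_evalLp_rpow hp (x j)
    _ ≤ ∫ _, ⨆ φ : DualBall 𝕜 E, ∑ j, ‖φ.1 (x j)‖ ^ p ∂μ :=
        integral_mono (integrable_finsetSum _ fun j _ => hint j) (integrable_const _)
          fun φ => le_ciSup (DualBall.bddAbove_sum_norm_rpow hp.le x) φ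
    _ = ⨆ φ : DualBall 𝕜 E, ∑ j, ‖φ.1 (x j)‖ ^ p := by simp

end evalLp

section domination

omit [NormedSpace 𝕜 F]

variable {𝕜} {p : ℝ} {n : ℕ} {P : E → F}

theorem DomIneq.mono {C C' : ℝ} (h : DomIneq 𝕜 p n P C) (hC : C ≤ C') : DomIneq 𝕜 p n P C' :=
  fun m x => (h m x).trans <| mul_le_mul_of_nonneg_right hC <|
    Real.iSup_nonneg fun _ => Real.rpow_nonneg (Finset.sum_nonneg fun _ _ => by positivity) _

theorem domNorm_le {C : ℝ} (hC : 0 ≤ C) (h : DomIneq 𝕜 p n P C) : domNorm 𝕜 p n P ≤ C :=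
  le_of_forall_pos_le_add fun ε hε =>
    csInf_le ⟨0, fun _ hC' => hC'.1.le⟩ ⟨by positivity, h.mono (by linarith)⟩

theorem domIneq_of_norm_le_mul_evalLp_pow {μ : Measure (DualBall 𝕜 E)} [IsProbabilityMeasure μ]
    (hn : 0 < n) (hp : 0 < p) {C : ℝ} (hC : 0 ≤ C)
    (hP : ∀ x, ‖P x‖ ≤ C * ‖evalLp 𝕜 p μ x‖ ^ n) : DomIneq 𝕜 p n P C := by
  intro m x
  have hn' : (n : ℝ) ≠ 0 := Nat.cast_ne_zero.2 hn.ne'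
  have hpn : 0 ≤ p / n := by positivity
  -- the norm of `Lp` is a `toReal`, nonnegative even without `Fact (1 ≤ p)`
  have he : ∀ y, 0 ≤ ‖evalLp 𝕜 p μ y‖ := fun _ => ENNReal.toReal_nonneg
  have hexp : p / n * (n / p) = 1 := by field_simp
  set S := ⨆ φ : DualBall 𝕜 E, ∑ j, ‖φ.1 (x j)‖ ^ p
  have hS : 0 ≤ S := Real.iSup_nonneg fun _ => by positivity
  have hterm : ∀ j, ‖P (x j)‖ ^ (p / n) ≤ C ^ (p / n) * ‖evalLp 𝕜 p μ (x j)‖ ^ p := fun j => by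
    calc ‖P (x j)‖ ^ (p / n) ≤ (C * ‖evalLp 𝕜 p μ (x j)‖ ^ n) ^ (p / n) :=
          Real.rpow_le_rpow (norm_nonneg _) (hP _) hpn
      _ = C ^ (p / n) * ‖evalLp 𝕜 p μ (x j)‖ ^ p := by
        rw [Real.mul_rpow hC (pow_nonneg (he _) n), ← Real.rpow_natCast, ← Real.rpow_mul (he _),
          mul_div_cancel₀ p hn']
  have hsum : ∑ j, ‖P (x j)‖ ^ (p / n) ≤ C ^ (p / n) * S :=
    calc ∑ j, ‖P (x j)‖ ^ (p / n) ≤ ∑ j, C ^ (p / n) * ‖evalLp 𝕜 p μ (x j)‖ ^ p :=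
          Finset.sum_le_sum fun j _ => hterm j
      _ ≤ C ^ (p / n) * S := by
          rw [← Finset.mul_sum]; gcongr; exact sum_norm_evalLp_rpow_le hp x
  calc (∑ j, ‖P (x j)‖ ^ (p / n)) ^ (n / p) ≤ (C ^ (p / n) * S) ^ (n / p) :=
        Real.rpow_le_rpow (by positivity) hsum (by positivity)
    _ = C * S ^ (n / p) := by
        rw [Real.mul_rpow (by positivity) hS, ← Real.rpow_mul hC, hexp, Real.rpow_one]
    _ ≤ C * ⨆ φ : DualBall 𝕜 E, (∑ j, ‖φ.1 (x j)‖ ^ p) ^ (n / p) := by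
        gcongr
        exact Real.rpow_iSup_le_iSup_rpow (fun _ => by positivity)
          (DualBall.bddAbove_sum_norm_rpow hp.le x) (by positivity)

end domination

theorem statement8
    (n : ℕ) (hn : 0 < n) (p : ℝ) (hp : 1 ≤ p) (P : E → F) :
    haveI : Fact (1 ≤ ENNReal.ofReal p) := ⟨ENNReal.one_le_ofReal.mpr hp⟩
    ∀ (μ : Measure (DualBall 𝕜 E)), IsProbabilityMeasure μ → μ.Regular →
      ∀ Q : ↥(GEp 𝕜 p μ) → F, IsHomogPoly 𝕜 n Q →
        (∀ x : E, P x = Q ⟨evalLp 𝕜 p μ x,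
          Submodule.le_topologicalClosure _ (Submodule.subset_span (Set.mem_range_self x))⟩) →
        (∃ C > 0, DomIneq 𝕜 p n P C) ∧ domNorm 𝕜 p n P ≤ supNorm Q := by
  have : Fact (1 ≤ ENNReal.ofReal p) := ⟨ENNReal.one_le_ofReal.mpr hp⟩
  intro μ _ _ Q hQ hPQ
  have hbound : ∀ x, ‖P x‖ ≤ supNorm Q * ‖evalLp 𝕜 p μ x‖ ^ n := fun x =>
    hPQ x ▸ hQ.norm_le_supNorm_mul_pow _
  have hdom : DomIneq 𝕜 p n P (supNorm Q) :=
    domIneq_of_norm_le_mul_evalLp_pow hn (by linarith) hQ.supNorm_nonneg hbound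
  exact ⟨⟨supNorm Q + 1, by linarith [hQ.supNorm_nonneg], hdom.mono (by linarith)⟩,
    domNorm_le hQ.supNorm_nonneg hdom⟩
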